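/- Neighbourhood logic has one-step interpolation: take F := N (the neighbourhood functor) and the single unary modality □ interpreted by the predicate lifting ⟦□⟧_X(A) := {α ∈ N X | A ∈ α}. Then for every type X, all interpolable finite Boolean subalgebras 𝔄₁, 𝔄₂ of Set X, and all one-step formulas φ ∈ Prop({□}(𝔄₁)) and ψ ∈ Prop({□}(𝔄₂)) with N X ⊨ φ → ψ, there exists ρ ∈ Prop({□}(𝔄₁ ∩ 𝔄₂)) with N X ⊨ φ → ρ and N X ⊨ ρ → ψ. -/

import Mathlib

universe u

/-- Propositional formulas over a type `Z` of atoms. Formulas in `PropForm Z` with atoms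
`z` read as `□z` are exactly the one-step formulas `Prop({□}(Z))` of neighbourhood logic. -/
inductive PropForm (Z : Type _) : Type _
  | bot : PropForm Z
  | atom : Z → PropForm Z
  | neg : PropForm Z → PropForm Z
  | and : PropForm Z → PropForm Z → PropForm Z

/-- Extension of a propositional formula under a valuation of atoms by subsets of `X`. -/
def PropForm.eval {Z : Type _} {X : Type _} (τ : Z → Set X) : PropForm Z → Set X
  | .bot => ∅
  | .atom z => τ z
  | .neg φ => (PropForm.eval τ φ)ᶜ
  | .and φ ψ => PropForm.eval τ φ ∩ PropForm.eval τ ψ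

/-- The interpretation `⟦□⟧_X(A) = {α ∈ N X | A ∈ α}` of the neighbourhood modality, where
`N X = Set (Set X)` is the neighbourhood functor. -/
def boxN (X : Type u) (A : Set X) : Set (Set (Set X)) := {α | A ∈ α}

/-- A Boolean subalgebra of `Set X`. -/
def IsBoolSubalg {X : Type u} (𝔄 : Set (Set X)) : Prop :=
  ∅ ∈ 𝔄 ∧ Set.univ ∈ 𝔄 ∧ (∀ A ∈ 𝔄, Aᶜ ∈ 𝔄) ∧ (∀ A ∈ 𝔄, ∀ B ∈ 𝔄, A ∪ B ∈ 𝔄) ∧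
    (∀ A ∈ 𝔄, ∀ B ∈ 𝔄, A ∩ B ∈ 𝔄)

/-- Interpolable pairs of Boolean subalgebras. -/
def Interpolable {X : Type u} (𝔄₁ 𝔄₂ : Set (Set X)) : Prop :=
  ∀ A ∈ 𝔄₁, ∀ B ∈ 𝔄₂, A ⊆ B → ∃ C ∈ 𝔄₁ ∩ 𝔄₂, A ⊆ C ∧ C ⊆ B

namespace PropForm

variable {Z W : Type _}

/-- Boolean satisfaction of a propositional formula. -/
def sat (v : Z → Prop) : PropForm Z → Prop
  | .bot => False
  | .atom z => v z
  | .neg φ => ¬ sat v φ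
  | .and φ ψ => sat v φ ∧ sat v ψ

lemma mem_eval {X : Type _} (τ : Z → Set X) (φ : PropForm Z) (x : X) :
    x ∈ eval τ φ ↔ sat (fun z => x ∈ τ z) φ := by
  induction φ with
  | bot => simp [eval, sat]
  | atom z => simp [eval, sat]
  | neg φ ih => simp [eval, sat, ih]
  | and φ ψ ih1 ih2 => simp [eval, sat, ih1, ih2]

/-- The list of atoms occurring in a formula. -/
def atoms : PropForm Z → List Z
  | .bot => []
  | .atom z => [z]
  | .neg φ => atoms φ
  | .and φ ψ => atoms φ ++ atoms ψ

lemma sat_congr {v w : Z → Prop} {φ : PropForm Z}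
    (h : ∀ z ∈ atoms φ, (v z ↔ w z)) : sat v φ ↔ sat w φ := by
  induction φ with
  | bot => simp [sat]
  | atom z => simpa [sat, atoms] using h z (by simp [atoms])
  | neg φ ih =>
      simp only [sat]
      rw [ih (fun z hz => h z hz)]
  | and φ ψ ih1 ih2 =>
      simp only [sat]
      rw [ih1 (fun z hz => h z (by simp [atoms, hz])),
        ih2 (fun z hz => h z (by simp [atoms, hz]))]

/-- Relabelling of atoms. -/
def pmap (g : Z → W) : PropForm Z → PropForm W
  | .bot => .bot
  | .atom z => .atom (g z)
  | .neg φ => .neg (pmap g φ)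
  | .and φ ψ => .and (pmap g φ) (pmap g ψ)

lemma sat_pmap (g : Z → W) (v : W → Prop) (φ : PropForm Z) :
    sat v (pmap g φ) ↔ sat (fun z => v (g z)) φ := by
  induction φ with
  | bot => simp [pmap, sat]
  | atom z => simp [pmap, sat]
  | neg φ ih => simp [pmap, sat, ih]
  | and φ ψ ih1 ih2 => simp [pmap, sat, ih1, ih2]

lemma atoms_pmap (g : Z → W) (φ : PropForm Z) :
    atoms (pmap g φ) = (atoms φ).map g := by
  induction φ with
  | bot => simp [pmap, atoms]
  | atom z => simp [pmap, atoms]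
  | neg φ ih => simp [pmap, atoms, ih]
  | and φ ψ ih1 ih2 => simp [pmap, atoms, ih1, ih2]

/-- Substitute the constant `b` for the atom `a`. -/
def subst [DecidableEq Z] (a : Z) (b : Prop) [Decidable b] : PropForm Z → PropForm Z
  | .bot => .bot
  | .atom z => if z = a then (if b then .neg .bot else .bot) else .atom z
  | .neg φ => .neg (subst a b φ)
  | .and φ ψ => .and (subst a b φ) (subst a b ψ)

lemma sat_subst [DecidableEq Z] (a : Z) (b : Prop) [Decidable b] (v : Z → Prop)
    (φ : PropForm Z) :
    sat v (subst a b φ) ↔ sat (fun z => if z = a then b else v z) φ := by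
  induction φ with
  | bot => simp [subst, sat]
  | atom z =>
      by_cases hz : z = a
      · by_cases hb : b <;> simp [subst, sat, hz, hb]
      · simp [subst, sat, hz]
  | neg φ ih => simp [subst, sat, ih]
  | and φ ψ ih1 ih2 => simp [subst, sat, ih1, ih2]

lemma atoms_subst [DecidableEq Z] (a : Z) (b : Prop) [Decidable b] (φ : PropForm Z) :
    ∀ z ∈ atoms (subst a b φ), z ∈ atoms φ ∧ z ≠ a := by
  induction φ with
  | bot => simp [subst, atoms]
  | atom z =>
      intro w hw
      by_cases hz : z = a
      · by_cases hb : b <;> simp [subst, atoms, hz, hb] at hw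
      · simp [subst, atoms, hz] at hw
        simp [atoms, hw]
        exact hw ▸ hz
  | neg φ ih => exact ih
  | and φ ψ ih1 ih2 =>
      intro z hz
      simp only [subst, atoms, List.mem_append] at hz ⊢
      rcases hz with h | h
      · exact ⟨Or.inl (ih1 z h).1, (ih1 z h).2⟩
      · exact ⟨Or.inr (ih2 z h).1, (ih2 z h).2⟩

/-- Disjunction. -/
def orF (x y : PropForm Z) : PropForm Z := .neg (.and (.neg x) (.neg y))

lemma sat_orF (v : Z → Prop) (x y : PropForm Z) :
    sat v (orF x y) ↔ sat v x ∨ sat v y := by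
  simp [orF, sat]; tauto

lemma atoms_orF (x y : PropForm Z) : atoms (orF x y) = atoms x ++ atoms y := rfl

/-- Existentially quantify away the atom `a`. -/
noncomputable def elimAtom (a : Z) (φ : PropForm Z) : PropForm Z :=
  letI := Classical.decEq Z
  orF (subst a True φ) (subst a False φ)

lemma sat_elimAtom_of_sat (a : Z) (φ : PropForm Z) (v : Z → Prop)
    (h : sat v φ) : sat v (elimAtom a φ) := by
  classical
  rw [elimAtom, sat_orF, sat_subst, sat_subst]
  by_cases hva : v a
  · left
    rw [sat_congr (w := v) (fun z _ => ?_)]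
    · exact h
    · by_cases hz : z = a <;> simp [hz, hva]
  · right
    rw [sat_congr (w := v) (fun z _ => ?_)]
    · exact h
    · by_cases hz : z = a <;> simp [hz, hva]

lemma atoms_elimAtom (a : Z) (φ : PropForm Z) :
    ∀ z ∈ atoms (elimAtom a φ), z ∈ atoms φ ∧ z ≠ a := by
  classical
  intro z hz
  rw [elimAtom] at hz
  rw [atoms_orF, List.mem_append] at hz
  rcases hz with h | h
  · exact atoms_subst _ _ _ z h
  · exact atoms_subst _ _ _ z h

lemma sat_elimAtom_to (a : Z) (φ : PropForm Z) (Q : (Z → Prop) → Prop)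
    (hQ : ∀ v w : Z → Prop, (∀ z, z ≠ a → (v z ↔ w z)) → Q v → Q w)
    (h : ∀ v, sat v φ → Q v) :
    ∀ v, sat v (elimAtom a φ) → Q v := by
  classical
  intro v hv
  rw [elimAtom, sat_orF, sat_subst, sat_subst] at hv
  rcases hv with hv | hv
  · exact hQ _ v (fun z hz => by simp [hz]) (h _ hv)
  · exact hQ _ v (fun z hz => by simp [hz]) (h _ hv)

/-- Eliminate a list of atoms. -/
noncomputable def elimList (L : List Z) (φ : PropForm Z) : PropForm Z :=
  L.foldr elimAtom φ

lemma sat_elimList_of_sat (L : List Z) (φ : PropForm Z) (v : Z → Prop)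
    (h : sat v φ) : sat v (elimList L φ) := by
  induction L with
  | nil => exact h
  | cons a L ih => exact sat_elimAtom_of_sat a _ v ih

lemma atoms_elimList (L : List Z) (φ : PropForm Z) :
    ∀ z ∈ atoms (elimList L φ), z ∈ atoms φ ∧ z ∉ L := by
  induction L with
  | nil => simp [elimList]
  | cons a L ih =>
      intro z hz
      obtain ⟨hz1, hz2⟩ := atoms_elimAtom a _ z hz
      obtain ⟨hz3, hz4⟩ := ih z hz1
      exact ⟨hz3, by simp [hz2, hz4]⟩

lemma sat_elimList_to (L : List Z) (φ : PropForm Z) (Q : (Z → Prop) → Prop)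
    (hQ : ∀ v w : Z → Prop, (∀ z, z ∉ L → (v z ↔ w z)) → Q v → Q w)
    (h : ∀ v, sat v φ → Q v) :
    ∀ v, sat v (elimList L φ) → Q v := by
  induction L with
  | nil => exact h
  | cons a L ih =>
      refine sat_elimAtom_to a _ Q (fun v w hvw => hQ v w fun z hz => ?_) ?_
      · exact hvw z (fun h' => hz (h' ▸ (List.mem_cons_self : a ∈ a :: L)))
      · exact ih (fun v w hvw => hQ v w fun z hz => hvw z fun h' => hz (List.mem_cons_of_mem a h'))

end PropForm

/-- Neighbourhood logic has one-step interpolation: a one-step valid implication between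
`φ ∈ Prop({□}(𝔄₁))` and `ψ ∈ Prop({□}(𝔄₂))`, for interpolable finite Boolean subalgebras
`𝔄₁, 𝔄₂`, has an interpolant in `Prop({□}(𝔄₁ ∩ 𝔄₂))`. -/
theorem nbhd_one_step_interpolation
    (X : Type u) (𝔄₁ 𝔄₂ : Set (Set X))
    (h1 : IsBoolSubalg 𝔄₁) (h2 : IsBoolSubalg 𝔄₂)
    (hf1 : 𝔄₁.Finite) (hf2 : 𝔄₂.Finite) (hint : Interpolable 𝔄₁ 𝔄₂)
    (φ : PropForm ↥𝔄₁) (ψ : PropForm ↥𝔄₂)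
    (hval : PropForm.eval (fun A : ↥𝔄₁ => boxN X ↑A) φ
      ⊆ PropForm.eval (fun A : ↥𝔄₂ => boxN X ↑A) ψ) :
    ∃ ρ : PropForm ↥(𝔄₁ ∩ 𝔄₂),
      PropForm.eval (fun A : ↥𝔄₁ => boxN X ↑A) φ
        ⊆ PropForm.eval (fun A : ↥(𝔄₁ ∩ 𝔄₂) => boxN X ↑A) ρ ∧
      PropForm.eval (fun A : ↥(𝔄₁ ∩ 𝔄₂) => boxN X ↑A) ρ
        ⊆ PropForm.eval (fun A : ↥𝔄₂ => boxN X ↑A) ψ := by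
  classical
  set Φ : PropForm (Set X) := PropForm.pmap (fun A : ↥𝔄₁ => (A : Set X)) φ with hΦdef
  set Ψ : PropForm (Set X) := PropForm.pmap (fun A : ↥𝔄₂ => (A : Set X)) ψ with hΨdef
  have mem_iff : ∀ (S : Set (Set X)) (𝔅 : Set (Set X)) (χ : PropForm ↥𝔅),
      (S ∈ PropForm.eval (fun A : ↥𝔅 => boxN X ↑A) χ ↔
        PropForm.sat (fun B => B ∈ S) (PropForm.pmap (fun A : ↥𝔅 => (A : Set X)) χ)) := by
    intro S 𝔅 χ
    rw [PropForm.mem_eval, PropForm.sat_pmap]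
    exact Iff.rfl
  have hsat : ∀ u : Set X → Prop, PropForm.sat u Φ → PropForm.sat u Ψ := by
    intro u hu
    exact (mem_iff {A | u A} 𝔄₂ ψ).mp (hval ((mem_iff {A | u A} 𝔄₁ φ).mpr hu))
  set L : List (Set X) := (PropForm.atoms Φ).filter (fun z => decide (z ∉ 𝔄₂)) with hLdef
  have hL : ∀ z : Set X, z ∈ L ↔ z ∈ PropForm.atoms Φ ∧ z ∉ 𝔄₂ := by
    intro z; simp [hLdef, List.mem_filter]
  have hatomsΦ : ∀ z ∈ PropForm.atoms Φ, z ∈ 𝔄₁ := by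
    intro z hz
    rw [hΦdef, PropForm.atoms_pmap, List.mem_map] at hz
    obtain ⟨A, -, rfl⟩ := hz
    exact A.2
  have hatomsΨ : ∀ z ∈ PropForm.atoms Ψ, z ∈ 𝔄₂ := by
    intro z hz
    rw [hΨdef, PropForm.atoms_pmap, List.mem_map] at hz
    obtain ⟨A, -, rfl⟩ := hz
    exact A.2
  set Ρ : PropForm (Set X) := PropForm.elimList L Φ with hΡdef
  have hφΡ : ∀ u : Set X → Prop, PropForm.sat u Φ → PropForm.sat u Ρ :=
    fun u hu => PropForm.sat_elimList_of_sat L Φ u hu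
  have hΡψ : ∀ u : Set X → Prop, PropForm.sat u Ρ → PropForm.sat u Ψ := by
    refine PropForm.sat_elimList_to L Φ (fun u => PropForm.sat u Ψ) ?_ hsat
    intro v w hvw hv
    rw [PropForm.sat_congr (w := v) (fun z hz => ?_)]
    · exact hv
    · exact (hvw z (fun hzL => ((hL z).mp hzL).2 (hatomsΨ z hz))).symm
  have hΡatoms : ∀ z ∈ PropForm.atoms Ρ, z ∈ 𝔄₁ ∩ 𝔄₂ := by
    intro z hz
    obtain ⟨hz1, hz2⟩ := PropForm.atoms_elimList L Φ z hz
    refine ⟨hatomsΦ z hz1, ?_⟩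
    by_contra hz3
    exact hz2 ((hL z).mpr ⟨hz1, hz3⟩)
  have hbase : (∅ : Set X) ∈ 𝔄₁ ∩ 𝔄₂ := ⟨h1.1, h2.1⟩
  set g : Set X → ↥(𝔄₁ ∩ 𝔄₂) :=
    fun z => if h : z ∈ 𝔄₁ ∩ 𝔄₂ then ⟨z, h⟩ else ⟨∅, hbase⟩ with hgdef
  refine ⟨PropForm.pmap g Ρ, ?_, ?_⟩
  · intro α hα
    have hsΡ : PropForm.sat (fun B => B ∈ α) Ρ := hφΡ _ ((mem_iff α 𝔄₁ φ).mp hα)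
    rw [PropForm.mem_eval, PropForm.sat_pmap]
    rw [PropForm.sat_congr (w := fun B => B ∈ α) (fun z hz => ?_)]
    · exact hsΡ
    · have h' := hΡatoms z hz
      simp [hgdef, boxN, h'.1, h'.2]
  · intro α hα
    rw [PropForm.mem_eval, PropForm.sat_pmap] at hα
    have hsΡ : PropForm.sat (fun B => B ∈ α) Ρ := by
      rw [PropForm.sat_congr (w := fun z => α ∈ boxN X ↑(g z)) (fun z hz => ?_)]
      · exact hα
      · have h' := hΡatoms z hz
        show z ∈ α ↔ α ∈ boxN X ↑(g z)
        simp [hgdef, boxN, h'.1, h'.2]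
    exact (mem_iff α 𝔄₂ ψ).mpr (hΡψ _ hsΡ)
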